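/- arXiv:1604.07698 — 8 statements merged into one kernel-verified Lean document; each statement's English description precedes it below -/
import Mathlib

section
/- If n+1 is prime, then the ladder graph P_n × P_2 has a prime labeling, i.e., there is a bijection from its 2n vertices to {1,...,2n} such that adjacent vertices receive coprime labels. -/
/-- Adjacency in the ladder graph `P_n × P_2`: vertices are pairs (column, row). -/
def ladderAdj (n : ℕ) (v w : Fin n × Fin 2) : Prop :=
  (v.2 = w.2 ∧ ((v.1 : ℕ) + 1 = (w.1 : ℕ) ∨ (w.1 : ℕ) + 1 = (v.1 : ℕ))) ∨
  (v.1 = w.1 ∧ v.2 ≠ w.2)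

/-- The labeling: bottom row gets `i+1`, top row gets `n+i+2` except last column gets `n+1`. -/
def lab (n : ℕ) (p : Fin n × Fin 2) : ℕ :=
  if (p.2 : ℕ) = 0 then (p.1 : ℕ) + 1
  else if (p.1 : ℕ) = n - 1 then n + 1 else n + (p.1 : ℕ) + 2

lemma copr_succ (k : ℕ) : Nat.Coprime k (k + 1) := by
  have h : k + 1 = 1 + k := by omega
  rw [h]
  exact Nat.coprime_add_self_right.mpr (Nat.coprime_one_right k)

lemma lab_rung (n : ℕ) (hp : Nat.Prime (n + 1)) (k : ℕ) (hk : k < n) :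
    Nat.Coprime (k + 1) (if k = n - 1 then n + 1 else n + k + 2) := by
  split_ifs with h
  · have : k + 1 = n := by omega
    rw [this]; exact copr_succ n
  · have hc : Nat.Coprime (k + 1) (n + 1) :=
      ((hp.coprime_iff_not_dvd).mpr (Nat.not_dvd_of_pos_of_lt (by omega) (by omega))).symm
    have : n + k + 2 = (n + 1) + (k + 1) := by omega
    rw [this]
    exact (Nat.coprime_add_self_right).mpr hc

lemma lab_top (n : ℕ) (hp : Nat.Prime (n + 1)) (k : ℕ) (hk : k + 1 < n) :
    Nat.Coprime (if k = n - 1 then n + 1 else n + k + 2)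
      (if k + 1 = n - 1 then n + 1 else n + (k + 1) + 2) := by
  have hkne : k ≠ n - 1 := by omega
  rw [if_neg hkne]
  split_ifs with h
  · -- k+1 = n-1, so n+k+2 = 2n; need coprime (2n) (n+1)
    have h2 : n + k + 2 = 2 * n := by omega
    rw [h2]
    refine ((hp.coprime_iff_not_dvd).mpr ?_).symm
    intro hd
    have h2' : (n + 1) ∣ 2 * (n + 1) - 2 * n := Nat.dvd_sub (dvd_mul_left (n+1) 2) hd
    have : 2 * (n + 1) - 2 * n = 2 := by omega
    rw [this] at h2'
    have := Nat.le_of_dvd (by norm_num) h2'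
    omega
  · have : n + (k + 1) + 2 = (n + k + 2) + 1 := by omega
    rw [this]
    exact copr_succ _

theorem stmt_2 (n : ℕ) (hn : 0 < n) (hp : Nat.Prime (n + 1)) :
    ∃ f : Fin n × Fin 2 → ℕ,
      Set.BijOn f Set.univ (Set.Icc 1 (2 * n)) ∧
      ∀ v w, ladderAdj n v w → Nat.Coprime (f v) (f w) := by
  refine ⟨lab n, ⟨?_, ?_, ?_⟩, ?_⟩
  · intro p _
    have h1 := p.1.isLt
    simp only [lab, Set.mem_Icc]
    split_ifs <;> omega
  · intro p _ q _ h
    have h1 := p.1.isLt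
    have h2 := q.1.isLt
    have h3 := p.2.isLt
    have h4 := q.2.isLt
    simp only [lab] at h
    have : (p.1 : ℕ) = (q.1 : ℕ) ∧ (p.2 : ℕ) = (q.2 : ℕ) := by
      split_ifs at h <;> omega
    exact Prod.ext (Fin.ext this.1) (Fin.ext this.2)
  · intro m hm
    simp only [Set.mem_Icc] at hm
    rcases le_or_gt m n with h | h
    · exact ⟨(⟨m - 1, by omega⟩, ⟨0, by omega⟩), trivial, by simp [lab]; omega⟩
    · rcases eq_or_lt_of_le (Nat.succ_le_of_lt h) with h' | h'
      · refine ⟨(⟨n - 1, by omega⟩, ⟨1, by omega⟩), trivial, ?_⟩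
        simp only [lab]
        norm_num
        omega
      · refine ⟨(⟨m - n - 2, by omega⟩, ⟨1, by omega⟩), trivial, ?_⟩
        simp only [lab]
        norm_num
        rw [if_neg (by omega)]
        omega
  · rintro v w (⟨hrow, hcol⟩ | ⟨hcol, hrow⟩)
    · -- horizontal edge
      have h1 := v.1.isLt
      have h2 := w.1.isLt
      have hr : (v.2 : ℕ) = (w.2 : ℕ) := by rw [hrow]
      rcases (by omega : (v.2:ℕ) = 0 ∨ (v.2:ℕ) = 1) with h0 | h0
      · -- bottom row
        simp only [lab, h0, hr ▸ h0, if_pos rfl]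
        rcases hcol with hc | hc
        · rw [hc]; exact copr_succ _
        · rw [hc]; exact (copr_succ _).symm
      · -- top row
        have hw0 : (w.2 : ℕ) = 1 := hr ▸ h0
        simp only [lab, h0, hw0]
        norm_num
        rcases hcol with hc | hc
        · have := lab_top n hp (v.1 : ℕ) (by omega)
          rw [hc] at this
          exact this
        · have := lab_top n hp (w.1 : ℕ) (by omega)
          rw [hc] at this
          exact this.symm
    · -- rung
      have hc : (v.1 : ℕ) = (w.1 : ℕ) := by rw [hcol]
      have hne : (v.2 : ℕ) ≠ (w.2 : ℕ) := fun h => hrow (Fin.ext h)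
      have h3 := v.2.isLt
      have h4 := w.2.isLt
      rcases (by omega : (v.2:ℕ) = 0 ∨ (v.2:ℕ) = 1) with h0 | h0
      · have hw1 : (w.2 : ℕ) = 1 := by omega
        simp only [lab, h0, hw1]
        norm_num
        rw [hc]
        exact lab_rung n hp _ w.1.isLt
      · have hw0 : (w.2 : ℕ) = 0 := by omega
        simp only [lab, h0, hw0]
        norm_num
        rw [hc]
        exact (lab_rung n hp _ w.1.isLt).symm
end

section
/- The ladder P_n × P_2 has a consecutive cyclic prime labeling with the value 1 assigned to vertex v_1 if and only if 2n+1 is prime. -/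
/-- The consecutive cyclic labeling of the ladder with 1 on `v₁`:
`v_i` (row 0) gets label `i`, `u_i` (row 1) gets label `2n + 1 - i`. -/
def ccLabel (n : ℕ) (v : Fin n × Fin 2) : ℕ :=
  if v.2 = 0 then (v.1 : ℕ) + 1 else 2 * n - (v.1 : ℕ)

lemma rung_coprime {n a : ℕ} (hp : Nat.Prime (2 * n + 1)) (ha : a < n) :
    Nat.Coprime (a + 1) (2 * n - a) := by
  set d := Nat.gcd (a + 1) (2 * n - a) with hd
  have h1 : d ∣ a + 1 := Nat.gcd_dvd_left _ _
  have h2 : d ∣ 2 * n - a := Nat.gcd_dvd_right _ _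
  have hsum : d ∣ 2 * n + 1 := by
    have : (a + 1) + (2 * n - a) = 2 * n + 1 := by omega
    exact this ▸ Nat.dvd_add h1 h2
  rcases (Nat.Prime.eq_one_or_self_of_dvd hp d hsum) with h | h
  · exact h
  · exfalso
    have : d ≤ a + 1 := Nat.le_of_dvd (Nat.succ_pos a) h1
    omega

lemma consec_coprime (a : ℕ) : Nat.Coprime (a + 1) a := by
  unfold Nat.Coprime
  rw [Nat.add_comm, Nat.gcd_add_self_left, Nat.gcd_comm, Nat.gcd_one_right]

theorem stmt_4 (n : ℕ) (hn : 0 < n) :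
    (∀ v w, ladderAdj n v w → Nat.Coprime (ccLabel n v) (ccLabel n w)) ↔
      Nat.Prime (2 * n + 1) := by
  constructor
  · intro h
    by_contra hnp
    set N := 2 * n + 1 with hN
    have hN3 : 3 ≤ N := by omega
    set p := Nat.minFac N with hpdef
    have hpp : p.Prime := Nat.minFac_prime (by omega)
    have hpd : p ∣ N := Nat.minFac_dvd N
    have hsq : p * p ≤ N := by
      have := Nat.minFac_sq_le_self (n := N) (by omega) hnp
      rwa [pow_two] at this
    have hp2 : 2 ≤ p := hpp.two_le
    have hpn : p ≤ n := by nlinarith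
    have hlt : p - 1 < n := by omega
    have hadj' : ladderAdj n (⟨⟨p - 1, hlt⟩, 0⟩) (⟨⟨p - 1, hlt⟩, 1⟩) :=
      Or.inr ⟨rfl, show (0 : Fin 2) ≠ 1 by decide⟩
    have := h _ _ hadj'
    simp only [ccLabel] at this
    norm_num at this
    -- this : Nat.Coprime (p - 1 + 1) (2 * n - (p - 1))
    have e1 : p - 1 + 1 = p := by omega
    have e2 : p ∣ 2 * n - (p - 1) := by
      have : 2 * n - (p - 1) = N - p := by omega
      rw [this]
      exact Nat.dvd_sub hpd dvd_rfl
    rw [e1] at this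
    have : p ∣ 1 := this ▸ Nat.dvd_gcd dvd_rfl e2
    have := Nat.le_of_dvd one_pos this
    omega
  · intro hp v w hadj
    obtain ⟨⟨i, hi⟩, r⟩ := v
    obtain ⟨⟨j, hj⟩, s⟩ := w
    rcases hadj with ⟨hrs, hij⟩ | ⟨hij, hrs⟩
    · -- horizontal edge
      simp only at hrs hij
      subst hrs
      fin_cases r <;> simp only [ccLabel] <;> norm_num <;>
        rcases hij with h | h
      · rw [show j = i + 1 from h.symm]
        exact (consec_coprime _).symm
      · rw [show i = j + 1 from h.symm]
        exact consec_coprime _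
      · rw [show 2 * n - i = (2 * n - j) + 1 by omega]
        exact consec_coprime _
      · rw [show 2 * n - j = (2 * n - i) + 1 by omega]
        exact (consec_coprime _).symm
    · -- rung edge
      simp only [Fin.mk.injEq] at hij
      subst hij
      fin_cases r <;> fin_cases s <;> simp at hrs <;> simp only [ccLabel] <;> norm_num
      · exact rung_coprime hp hi
      · exact (rung_coprime hp hi).symm
end

section
/- Suppose that for every positive integer n there exists a prime q and an integer p, with p = 1 or p a prime less than 2n+1, such that 2n = q - p. Then for every n ≥ 1 the ladder graph P_n × P_2 has a prime labeling. -/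
/-!
Walk around the ladder along its Hamiltonian cycle `v_1, …, v_n, u_n, …, u_1` and label the
vertex at position `x ∈ [0, 2n)` by `(x + k) mod 2n + 1`, where `p = 2k + 1`. Consecutive
positions get consecutive labels modulo `2n`, hence coprime ones. The rung `v_i u_i` joins
positions `x` and `2n - 1 - x`, whose labels add up to `2n + p = q` or, when one of them wraps
around, to `p`; two positive numbers with prime sum are coprime.
-/

open Set Function

theorem Nat.coprime_of_add_prime {x y : ℕ} (hx : 0 < x) (hy : 0 < y) (hxy : (x + y).Prime) :
    x.Coprime y := by
  have hlt : x < x + y := by omega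
  have : x.Coprime (x + y) :=
    ((hxy.coprime_iff_not_dvd).mpr (Nat.not_dvd_of_pos_of_lt hx hlt)).symm
  exact Nat.coprime_self_add_right.mp this

theorem Nat.coprime_mod_add_one_succ_mod (m a : ℕ) : (a % m + 1).Coprime ((a + 1) % m + 1) := by
  rw [← Nat.mod_add_mod]
  rcases m.eq_zero_or_pos with rfl | hm
  · simp
  rcases (show a % m + 1 ≤ m from Nat.mod_lt a hm).lt_or_eq with h | h
  · rw [Nat.mod_eq_of_lt h]
    exact Nat.coprime_self_add_right.mpr (Nat.coprime_one_right _)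
  · rw [h, Nat.mod_self]
    exact Nat.coprime_one_right _

theorem Nat.mod_eq_or_mod_add_eq {a m : ℕ} (h : a < 2 * m) : a % m = a ∨ a % m + m = a := by
  rcases lt_or_ge a m with ha | ha
  · exact .inl (Nat.mod_eq_of_lt ha)
  · rw [Nat.mod_eq_sub_mod ha, Nat.mod_eq_of_lt (by omega)]
    omega

theorem Set.bijOn_univ_of_injective_of_ncard_le {α β : Type*} [Finite α] {f : α → β} {t : Set β}
    (hf : Injective f) (hmaps : ∀ a, f a ∈ t) (hcard : t.ncard ≤ Nat.card α)
    (ht : t.Finite := by toFinite_tac) : BijOn f univ t := by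
  refine ⟨fun a _ ↦ hmaps a, hf.injOn, ?_⟩
  rw [SurjOn, image_univ]
  refine (eq_of_subset_of_ncard_le (range_subset_iff.mpr hmaps) ?_ ht).symm.subset
  rwa [ncard_range_of_injective hf]

/-- Position along the cycle `v_1, …, v_n, u_n, …, u_1`; row `0` is the `v`-rail. -/
def ladderPos (n : ℕ) (v : Fin n × Fin 2) : ℕ :=
  if v.2 = 0 then v.1 else 2 * n - 1 - v.1

theorem ladderPos_lt {n : ℕ} (v : Fin n × Fin 2) : ladderPos n v < 2 * n := by
  have := v.1.isLt
  unfold ladderPos; split_ifs <;> omega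

theorem ladderPos_injective (n : ℕ) : Injective (ladderPos n) := by
  rintro ⟨i, a⟩ ⟨j, b⟩ h
  have := i.isLt; have := j.isLt
  fin_cases a <;> fin_cases b <;> simp [ladderPos, Fin.ext_iff] at h ⊢ <;> omega

theorem ladderAdj.ladderPos_cases {n : ℕ} {v w : Fin n × Fin 2} (h : ladderAdj n v w) :
    ladderPos n v + 1 = ladderPos n w ∨ ladderPos n w + 1 = ladderPos n v ∨
      ladderPos n v + ladderPos n w + 1 = 2 * n := by
  obtain ⟨⟨i, hi⟩, a⟩ := v
  obtain ⟨⟨j, hj⟩, b⟩ := w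
  fin_cases a <;> fin_cases b <;> simp [ladderAdj, ladderPos] at h ⊢ <;> omega

def cycleLabel (m k x : ℕ) : ℕ := (x + k) % m + 1

section cycleLabel

variable {m k x y : ℕ}

theorem cycleLabel_mem_Icc (hm : 0 < m) : cycleLabel m k x ∈ Icc 1 m :=
  ⟨Nat.le_add_left _ _, Nat.mod_lt _ hm⟩

theorem cycleLabel_injOn : InjOn (cycleLabel m k) (Iio m) := by
  intro x hx y hy h
  have hmod : x % m = y % m := Nat.ModEq.add_right_cancel' k (Nat.succ_injective h)
  rwa [Nat.mod_eq_of_lt hx, Nat.mod_eq_of_lt hy] at hmod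

theorem coprime_cycleLabel_succ : (cycleLabel m k x).Coprime (cycleLabel m k (x + 1)) := by
  rw [cycleLabel, cycleLabel, add_right_comm]
  exact Nat.coprime_mod_add_one_succ_mod m (x + k)

theorem cycleLabel_add_cycleLabel (hxy : x + y + 1 = m) (hk : 2 * k < m) :
    cycleLabel m k x + cycleLabel m k y = m + (2 * k + 1) ∨
      cycleLabel m k x + cycleLabel m k y = 2 * k + 1 := by
  unfold cycleLabel
  rcases Nat.mod_eq_or_mod_add_eq (a := x + k) (m := m) (by omega) with hx | hx <;>
  rcases Nat.mod_eq_or_mod_add_eq (a := y + k) (m := m) (by omega) with hy | hy <;>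
  omega

theorem coprime_cycleLabel_of_add_eq (hxy : x + y + 1 = m) (hk : 2 * k < m)
    (hp : k = 0 ∨ (2 * k + 1).Prime) (hq : (m + (2 * k + 1)).Prime) :
    (cycleLabel m k x).Coprime (cycleLabel m k y) := by
  refine Nat.coprime_of_add_prime (Nat.succ_pos _) (Nat.succ_pos _) ?_
  rcases cycleLabel_add_cycleLabel hxy hk with h | h <;> rw [h]
  · exact hq
  · refine hp.resolve_left fun hk0 ↦ ?_
    -- with no rotation nothing wraps, and two positive labels cannot sum to `1`
    simp only [cycleLabel, hk0] at h
    omega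

end cycleLabel

theorem exists_ladder_primeLabeling {n k : ℕ} (hk : k < n) (hp : k = 0 ∨ (2 * k + 1).Prime)
    (hq : (2 * n + (2 * k + 1)).Prime) :
    ∃ f : Fin n × Fin 2 → ℕ, BijOn f univ (Icc 1 (2 * n)) ∧
      ∀ v w, ladderAdj n v w → (f v).Coprime (f w) := by
  refine ⟨cycleLabel (2 * n) k ∘ ladderPos n, ?_, fun v w hvw ↦ ?_⟩
  · refine bijOn_univ_of_injective_of_ncard_le ?_ (fun v ↦ cycleLabel_mem_Icc (by omega)) ?_
    · exact fun v w hvw ↦ ladderPos_injective n <|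
        cycleLabel_injOn (ladderPos_lt v) (ladderPos_lt w) hvw
    · simp [mul_comm]
  · rcases hvw.ladderPos_cases with h | h | h <;> simp only [Function.comp_apply]
    · exact h ▸ coprime_cycleLabel_succ
    · exact h ▸ coprime_cycleLabel_succ.symm
    · exact coprime_cycleLabel_of_add_eq h (by omega) hp hq

theorem stmt_9
    (h : ∀ n : ℕ, 0 < n → ∃ q p : ℕ, Nat.Prime q ∧
      (p = 1 ∨ (Nat.Prime p ∧ p < 2 * n + 1)) ∧ 2 * n + p = q) :
    ∀ n : ℕ, 1 ≤ n → ∃ f : Fin n × Fin 2 → ℕ,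
      Set.BijOn f Set.univ (Set.Icc 1 (2 * n)) ∧
      ∀ v w, ladderAdj n v w → Nat.Coprime (f v) (f w) := by
  intro n hn
  obtain ⟨_, p, hq, hp, rfl⟩ := h n hn
  have hp_pos : 0 < p := by
    rcases hp with rfl | ⟨hp, -⟩
    exacts [one_pos, hp.pos]
  obtain ⟨k, rfl⟩ : Odd p :=
    (Nat.odd_add'.mp (hq.odd_of_ne_two (by omega))).mpr (even_two_mul n)
  refine exists_ladder_primeLabeling ?_ (hp.imp (by omega) And.left) hq
  rcases hp with hp | ⟨-, hp⟩ <;> omega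
end

section
/- The partition A = {1,3,5,9} and B = {2,4,7,8} of a subset of {1,...,9} satisfies gcd(a,b)=1 for all a ∈ A, b ∈ B; moreover no such pair of disjoint 4-element subsets of {1,...,8} exists. Hence pr(K_{4,4}) = 9. -/
theorem stmt_12_aux (A B : Finset ℕ)
    (hU : A ∪ B = Finset.Icc 1 8) (hcA : A.card = 4)
    (hg : ∀ a ∈ A, ∀ b ∈ B, Nat.gcd a b = 1) (h2 : 2 ∈ A) : False := by
  have mem : ∀ x, x ∈ Finset.Icc 1 8 → x ∈ A ∨ x ∈ B := by
    intro x hx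
    rw [← hU] at hx
    exact Finset.mem_union.1 hx
  have h4 : 4 ∈ A := by
    rcases mem 4 (by decide) with h | h
    · exact h
    · exact absurd (hg 2 h2 4 h) (by decide)
  have h6 : 6 ∈ A := by
    rcases mem 6 (by decide) with h | h
    · exact h
    · exact absurd (hg 2 h2 6 h) (by decide)
  have h8 : 8 ∈ A := by
    rcases mem 8 (by decide) with h | h
    · exact h
    · exact absurd (hg 2 h2 8 h) (by decide)
  have h3 : 3 ∈ B := by
    rcases mem 3 (by decide) with h | h
    · have hsub : ({2, 3, 4, 6, 8} : Finset ℕ) ⊆ A := by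
        intro x hx
        fin_cases hx <;> assumption
      have := Finset.card_le_card hsub
      simp [hcA] at this
    · exact h
  exact absurd (hg 6 h6 3 h3) (by decide)

theorem stmt_12 :
    (∀ a ∈ ({1, 3, 5, 9} : Finset ℕ), ∀ b ∈ ({2, 4, 7, 8} : Finset ℕ), Nat.gcd a b = 1) ∧
    ¬ ∃ A B : Finset ℕ, A ⊆ Finset.Icc 1 8 ∧ B ⊆ Finset.Icc 1 8 ∧
        Disjoint A B ∧ A.card = 4 ∧ B.card = 4 ∧
        ∀ a ∈ A, ∀ b ∈ B, Nat.gcd a b = 1 := by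
  constructor
  · decide
  · rintro ⟨A, B, hA, hB, hd, hcA, hcB, hg⟩
    have hU : A ∪ B = Finset.Icc 1 8 := by
      apply Finset.eq_of_subset_of_card_le (Finset.union_subset hA hB)
      rw [Finset.card_union_of_disjoint hd, hcA, hcB]
      decide
    rcases Finset.mem_union.1 (show (2 : ℕ) ∈ A ∪ B by rw [hU]; decide) with h2 | h2
    · exact stmt_12_aux A B hU hcA hg h2
    · exact stmt_12_aux B A (by rw [Finset.union_comm]; exact hU) hcB
        (fun b hb a ha => Nat.gcd_comm a b ▸ hg a ha b hb) h2
end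

section
/- Let m < n be positive integers and suppose the interval ((m+n)/2, m+n] contains at least m-1 primes p_1,...,p_{m-1}. Then setting A = {1, p_1, ..., p_{m-1}} and B = {1,...,m+n} \ A gives gcd(a,b) = 1 for all a ∈ A and b ∈ B; hence K_{m,n} has a prime labeling. -/
theorem stmt_13 (m n : ℕ) (hm : 0 < m) (hmn : m < n)
    (P : Finset ℕ) (hcard : P.card = m - 1)
    (hP : ∀ p ∈ P, Nat.Prime p ∧ m + n < 2 * p ∧ p ≤ m + n) :
    (insert 1 P).card = m ∧
    (Finset.Icc 1 (m + n) \ insert 1 P).card = n ∧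
    ∀ a ∈ insert 1 P, ∀ b ∈ Finset.Icc 1 (m + n) \ insert 1 P,
      Nat.gcd a b = 1 := by
  have h1P : (1 : ℕ) ∉ P := fun h => (hP 1 h).1.one_lt.ne' rfl
  have hcard' : (insert 1 P).card = m := by
    rw [Finset.card_insert_of_notMem h1P, hcard]
    omega
  have hsub : insert 1 P ⊆ Finset.Icc 1 (m + n) := by
    intro x hx
    rcases Finset.mem_insert.mp hx with h | h
    · subst h; simp [Finset.mem_Icc]; omega
    · obtain ⟨hp, _, hle⟩ := hP x h
      exact Finset.mem_Icc.mpr ⟨hp.one_lt.le, hle⟩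
  refine ⟨hcard', ?_, ?_⟩
  · rw [Finset.card_sdiff_of_subset hsub, hcard', Nat.card_Icc]
    omega
  · intro a ha b hb
    rcases Finset.mem_insert.mp ha with rfl | hpa
    · exact Nat.gcd_one_left b
    · obtain ⟨hp, hlt, hle⟩ := hP a hpa
      rw [Finset.mem_sdiff, Finset.mem_Icc] at hb
      obtain ⟨⟨hb1, hb2⟩, hbn⟩ := hb
      refine ((Nat.Prime.coprime_iff_not_dvd hp).mpr ?_)
      intro hdvd
      obtain ⟨k, rfl⟩ := hdvd
      have ha2 := hp.two_le
      have hk1 : k = 1 := by nlinarith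
      subst hk1
      exact hbn (Finset.mem_insert_of_mem (by simpa using hpa))
end

section
/- K_{3,n} has a prime labeling for every n ≥ 8. -/
/-!
Every prime `p > N / 2` is coprime to every other element of `{1, …, N}`, so `A = {1, p, q}` works
as soon as there are two primes in `(N / 2, N]`. For this we rerun the Erdős proof of Bertrand's
postulate allowing one prime in `(n, 2n]`: that prime divides `centralBinom n` at most to a power
`≤ 2n`, and the extra factor `2n` is absorbed by squaring Bertrand's main inequality at `n / 2`.
Below `2048` explicit prime pairs cover the remaining cases.
-/

section

open Real

theorem eight_mul_rpow_sqrt_le {x : ℝ} (hx : 1024 ≤ x) :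
    8 * (2 * x) ^ √(2 * x) ≤ x ^ (2 * √x) := by
  have hx0 : 0 < x := by linarith
  have hpow : 0 < (2 * x) ^ √(2 * x) := rpow_pos_of_pos (by linarith) _
  have hlog2 : 0 < log 2 := log_pos one_lt_two
  have hL : 10 * log 2 ≤ log x := calc
    10 * log 2 = log (2 ^ 10) := by rw [log_pow]; norm_num
    _ ≤ log x := log_le_log (by norm_num) (by linarith)
  have hs : 1 ≤ √x := by rw [one_le_sqrt]; linarith
  have hr : √2 ≤ 3 / 2 := by rw [sqrt_le_left (by norm_num)]; norm_num
  rw [← log_le_log_iff (by positivity) (rpow_pos_of_pos hx0 _), log_mul (by norm_num) hpow.ne',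
    log_rpow (by linarith), log_rpow hx0, log_mul two_ne_zero hx0.ne', sqrt_mul zero_le_two,
    show (8 : ℝ) = 2 ^ 3 by norm_num, log_pow, Nat.cast_ofNat]
  have hsum : 0 ≤ √x * (log 2 + log x) := mul_nonneg (sqrt_nonneg x) (by linarith)
  nlinarith [mul_le_mul_of_nonneg_right hr hsum, mul_le_mul_of_nonneg_left hL (sqrt_nonneg x),
    mul_le_mul_of_nonneg_right hs hlog2.le]

theorem rpow_two_mul_eq_sq {x : ℝ} (hx : 0 ≤ x) (y : ℝ) : x ^ (2 * y) = (x ^ y) ^ 2 := by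
  rw [mul_comm, rpow_mul hx, rpow_two]

theorem real_two_primes_main_inequality {x : ℝ} (hx : 1024 ≤ x) :
    x * (2 * x) * (2 * x) ^ √(2 * x) * 4 ^ (2 * x / 3) ≤ 4 ^ x := by
  have h := Bertrand.real_main_inequality (x := x / 2) (by linarith)
  rw [mul_div_cancel₀ x two_ne_zero] at h
  calc x * (2 * x) * (2 * x) ^ √(2 * x) * 4 ^ (2 * x / 3)
      = x ^ 2 / 4 * (8 * (2 * x) ^ √(2 * x)) * 4 ^ (2 * x / 3) := by ring
    _ ≤ x ^ 2 / 4 * x ^ (2 * √x) * 4 ^ (2 * x / 3) := by gcongr; exact eight_mul_rpow_sqrt_le hx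
    _ = (x / 2 * x ^ √x * 4 ^ (x / 3)) ^ 2 := by
      rw [rpow_two_mul_eq_sq (by linarith), mul_div_assoc, rpow_two_mul_eq_sq (by norm_num)]
      ring
    _ ≤ (4 ^ (x / 2)) ^ 2 := by gcongr
    _ = 4 ^ x := by rw [← rpow_two_mul_eq_sq (by norm_num), mul_div_cancel₀ x two_ne_zero]

end

open Nat Finset

theorem two_primes_main_inequality {n : ℕ} (hn : 1024 ≤ n) :
    n * (2 * n) * (2 * n) ^ sqrt (2 * n) * 4 ^ (2 * n / 3) ≤ 4 ^ n := by
  rw [← @cast_le ℝ]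
  simp only [cast_mul, cast_pow, ← Real.rpow_natCast, cast_ofNat]
  refine le_trans ?_ (real_two_primes_main_inequality (by exact_mod_cast hn))
  gcongr
  · exact_mod_cast (by omega : 1 ≤ 2 * n)
  · exact_mod_cast Real.nat_sqrt_le_real_sqrt
  · norm_num
  · exact cast_div_le.trans (by norm_cast)

theorem prod_pow_factorization_centralBinom_range_le {n : ℕ} (hn : 0 < n) :
    ∏ p ∈ range (2 * n / 3 + 1), p ^ (centralBinom n).factorization p ≤
      (2 * n) ^ sqrt (2 * n) * 4 ^ (2 * n / 3) := by
  set f : ℕ → ℕ := fun p => p ^ (centralBinom n).factorization p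
  set P := primesBelow (2 * n / 3 + 1)
  have hprimes : ∏ p ∈ range (2 * n / 3 + 1), f p = ∏ p ∈ P, f p := by
    refine (prod_filter_of_ne fun p _ hfp => ?_).symm
    contrapose! hfp
    simp [f, factorization_eq_zero_of_not_prime _ hfp]
  rw [hprimes, ← prod_filter_mul_prod_filter_not P (· ≤ sqrt (2 * n))]
  gcongr ?_ * ?_
  · calc ∏ p ∈ P with p ≤ sqrt (2 * n), f p ≤ (2 * n) ^ #{p ∈ P | p ≤ sqrt (2 * n)} :=
          prod_le_pow_card _ _ _ fun p _ => pow_factorization_choose_le (by omega)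
      _ ≤ (2 * n) ^ #(Icc 1 (sqrt (2 * n))) := by
          refine pow_le_pow_right₀ (by omega) (card_le_card fun p hp => ?_)
          simp only [P, mem_filter, mem_primesBelow] at hp
          exact mem_Icc.2 ⟨hp.1.2.one_lt.le, hp.2⟩
      _ = (2 * n) ^ sqrt (2 * n) := by rw [card_Icc, Nat.add_sub_cancel]
  · calc ∏ p ∈ P with ¬p ≤ sqrt (2 * n), f p ≤ ∏ p ∈ P with ¬p ≤ sqrt (2 * n), p := by
          refine prod_le_prod' fun p hp => ?_
          simp only [P, mem_filter, mem_primesBelow, not_le] at hp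
          calc f p ≤ p ^ 1 := pow_le_pow_right₀ hp.1.2.one_lt.le
                (factorization_choose_le_one (sqrt_lt'.1 hp.2))
            _ = p := pow_one p
      _ ≤ ∏ p ∈ P, p := prod_le_prod_of_subset_of_one_le' (filter_subset _ _)
          fun p hp _ => (prime_of_mem_primesBelow hp).one_lt.le
      _ ≤ 4 ^ (2 * n / 3) := primorial_le_four_pow _

theorem prod_pow_factorization_centralBinom_Ico_eq {n : ℕ} (hn : 2 < n) :
    ∏ p ∈ Ico (2 * n / 3 + 1) (2 * n + 1), p ^ (centralBinom n).factorization p =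
      ∏ p ∈ Ioc n (2 * n) with p.Prime, p ^ (centralBinom n).factorization p := by
  refine (prod_subset (fun p hp => ?_) fun p hp hp' => ?_).symm
  · simp only [mem_filter, mem_Ioc, mem_Ico] at hp ⊢
    omega
  · simp only [mem_filter, mem_Ioc, mem_Ico, not_and] at hp hp'
    by_cases hpn : p ≤ n
    · rw [factorization_centralBinom_of_two_mul_self_lt_three_mul hn hpn (by omega), pow_zero]
    · rw [factorization_eq_zero_of_not_prime _ (hp' ⟨by omega, by omega⟩), pow_zero]

theorem centralBinom_le_of_card_primes_Ioc_le_one {n : ℕ} (hn : 2 < n)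
    (h : #{p ∈ Ioc n (2 * n) | p.Prime} ≤ 1) :
    centralBinom n ≤ (2 * n) ^ sqrt (2 * n) * 4 ^ (2 * n / 3) * (2 * n) := calc
  centralBinom n = ∏ p ∈ range (2 * n + 1), p ^ (centralBinom n).factorization p :=
    (prod_pow_factorization_centralBinom n).symm
  _ = (∏ p ∈ range (2 * n / 3 + 1), p ^ (centralBinom n).factorization p) *
      ∏ p ∈ Ioc n (2 * n) with p.Prime, p ^ (centralBinom n).factorization p := by
    rw [← prod_range_mul_prod_Ico _ (by omega : 2 * n / 3 + 1 ≤ 2 * n + 1),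
      prod_pow_factorization_centralBinom_Ico_eq hn]
  _ ≤ (2 * n) ^ sqrt (2 * n) * 4 ^ (2 * n / 3) * (2 * n) ^ #{p ∈ Ioc n (2 * n) | p.Prime} := by
    gcongr
    · exact prod_pow_factorization_centralBinom_range_le (by omega)
    · exact prod_le_pow_card _ _ _ fun p _ => pow_factorization_choose_le (by omega)
  _ ≤ (2 * n) ^ sqrt (2 * n) * 4 ^ (2 * n / 3) * (2 * n) := by
    gcongr
    exact (pow_le_pow_right₀ (by omega) h).trans_eq (pow_one _)

theorem one_lt_card_primes_Ioc {n : ℕ} (hn : 1024 ≤ n) : 1 < #{p ∈ Ioc n (2 * n) | p.Prime} := by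
  by_contra! h
  refine (four_pow_lt_mul_centralBinom n (by omega)).not_ge ?_
  calc n * centralBinom n ≤ n * ((2 * n) ^ sqrt (2 * n) * 4 ^ (2 * n / 3) * (2 * n)) := by
        grw [centralBinom_le_of_card_primes_Ioc_le_one (by omega) h]
    _ = n * (2 * n) * (2 * n) ^ sqrt (2 * n) * 4 ^ (2 * n / 3) := by ring
    _ ≤ 4 ^ n := two_primes_main_inequality hn

theorem exists_two_primes_in_upper_half_of_large {N : ℕ} (hN : 2048 ≤ N) :
    ∃ p q, p.Prime ∧ q.Prime ∧ p < q ∧ N < 2 * p ∧ q ≤ N := by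
  obtain ⟨a, ha, b, hb, hab⟩ := one_lt_card.1 (one_lt_card_primes_Ioc (n := N / 2) (by omega))
  simp only [mem_filter, mem_Ioc] at ha hb
  rcases lt_or_gt_of_ne hab with h | h
  · exact ⟨a, b, ha.2, hb.2, h, by omega, by omega⟩
  · exact ⟨b, a, hb.2, ha.2, h, by omega, by omega⟩

theorem exists_two_primes_in_upper_half_of_pair {N : ℕ} (p q : ℕ)
    (hpq : p.Prime ∧ q.Prime ∧ p < q) (hN : N < 2 * p)
    (H : N < q → ∃ p q, p.Prime ∧ q.Prime ∧ p < q ∧ N < 2 * p ∧ q ≤ N) :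
    ∃ p q, p.Prime ∧ q.Prime ∧ p < q ∧ N < 2 * p ∧ q ≤ N :=
  (le_or_gt q N).elim (fun hqN => ⟨p, q, hpq.1, hpq.2.1, hpq.2.2, hN, hqN⟩) H

theorem exists_two_primes_in_upper_half {N : ℕ} (hN : 11 ≤ N) :
    ∃ p q, p.Prime ∧ q.Prime ∧ p < q ∧ N < 2 * p ∧ q ≤ N := by
  rcases le_or_gt 2048 N with hlarge | hsmall
  · exact exists_two_primes_in_upper_half_of_large hlarge
  refine exists_two_primes_in_upper_half_of_pair 1031 1033 (by norm_num) (by omega) fun _ => ?_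
  refine exists_two_primes_in_upper_half_of_pair 641 643 (by norm_num) (by omega) fun _ => ?_
  refine exists_two_primes_in_upper_half_of_pair 383 389 (by norm_num) (by omega) fun _ => ?_
  refine exists_two_primes_in_upper_half_of_pair 227 229 (by norm_num) (by omega) fun _ => ?_
  refine exists_two_primes_in_upper_half_of_pair 191 193 (by norm_num) (by omega) fun _ => ?_
  refine exists_two_primes_in_upper_half_of_pair 101 103 (by norm_num) (by omega) fun _ => ?_
  refine exists_two_primes_in_upper_half_of_pair 59 61 (by norm_num) (by omega) fun _ => ?_
  refine exists_two_primes_in_upper_half_of_pair 37 41 (by norm_num) (by omega) fun _ => ?_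
  refine exists_two_primes_in_upper_half_of_pair 29 31 (by norm_num) (by omega) fun _ => ?_
  refine exists_two_primes_in_upper_half_of_pair 19 23 (by norm_num) (by omega) fun _ => ?_
  refine exists_two_primes_in_upper_half_of_pair 13 17 (by norm_num) (by omega) fun _ => ?_
  refine exists_two_primes_in_upper_half_of_pair 11 13 (by norm_num) (by omega) fun _ => ?_
  exact exists_two_primes_in_upper_half_of_pair 7 11 (by norm_num) (by omega) (by omega)

theorem Nat.Prime.coprime_of_lt_two_mul {p b : ℕ} (hp : p.Prime) (hb0 : 0 < b) (hb : b < 2 * p)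
    (hbp : b ≠ p) : Coprime p b := by
  refine hp.coprime_iff_not_dvd.2 fun ⟨k, hk⟩ => ?_
  rcases k with _ | _ | k
  · omega
  · omega
  · nlinarith

theorem stmt_15 (n : ℕ) (hn : 8 ≤ n) :
    ∃ A B : Finset ℕ, A.card = 3 ∧ B.card = n ∧ Disjoint A B ∧
      A ∪ B = Finset.Icc 1 (n + 3) ∧
      ∀ a ∈ A, ∀ b ∈ B, Nat.Coprime a b := by
  obtain ⟨p, q, hp, hq, hpq, hNp, hqN⟩ := exists_two_primes_in_upper_half (N := n + 3) (by omega)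
  have hA : {1, p, q} ⊆ Icc 1 (n + 3) := by
    simp only [insert_subset_iff, singleton_subset_iff, mem_Icc]
    omega
  have hcard : #{1, p, q} = 3 :=
    card_eq_three.2 ⟨1, p, q, hp.one_lt.ne, (hpq.trans' hp.one_lt).ne, hpq.ne, rfl⟩
  refine ⟨{1, p, q}, Icc 1 (n + 3) \ {1, p, q}, hcard, ?_, disjoint_sdiff,
    union_sdiff_of_subset hA, fun a ha b hb => ?_⟩
  · rw [card_sdiff_of_subset hA, card_Icc, hcard]
    omega
  simp only [mem_sdiff, mem_Icc, mem_insert, mem_singleton, not_or] at ha hb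
  rcases ha with rfl | rfl | rfl
  · exact coprime_one_left b
  · exact hp.coprime_of_lt_two_mul (by omega) (by omega) hb.2.2.1
  · exact hq.coprime_of_lt_two_mul (by omega) (by omega) hb.2.2.2
end

section
/- For every integer x ≥ 11, there are at least two primes p with x/2 < p ≤ x. -/
/-!
If `(n, 2n]` contained at most one prime, the factorisation of `centralBinom n` would give
`centralBinom n ≤ (2n)^√(2n) * 4^(2n/3)`: the at most `√(2n) - 1` primes up to `√(2n)` and the
single prime in `(n, 2n]` each contribute at most `2n`, each prime in `(√(2n), 2n/3]` at most
itself (so `4^(2n/3)` in total), and the primes in `(2n/3, n]` nothing. This is the bound that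
Erdős's proof of Bertrand's postulate refutes for `n ≥ 512`. For `11 ≤ x < 1024` it suffices to
exhibit pairs of primes `p < q` whose intervals `[q, 2p)` cover that range.
-/

open Finset

namespace Nat

theorem pow_factorization_centralBinom_le {n : ℕ} (hn : 2 < n) (p : ℕ) :
    p ^ (centralBinom n).factorization p ≤
      (if p.Prime ∧ (p ≤ sqrt (2 * n) ∨ n < p) then 2 * n else 1) *
        if p.Prime ∧ sqrt (2 * n) < p ∧ p ≤ 2 * n / 3 then p else 1 := by
  by_cases hp : p.Prime
  swap
  · simp [factorization_eq_zero_of_not_prime _ hp, hp]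
  have h_le_two_mul : p ^ (centralBinom n).factorization p ≤ 2 * n :=
    pow_factorization_choose_le (by omega)
  rcases le_or_gt p (sqrt (2 * n)) with hs | hs
  · rw [if_pos ⟨hp, .inl hs⟩, if_neg (by omega), mul_one]
    exact h_le_two_mul
  have h_le_self : p ^ (centralBinom n).factorization p ≤ p :=
    (pow_le_pow_right₀ hp.one_lt.le (factorization_choose_le_one (sqrt_lt'.mp hs))).trans_eq
      (pow_one p)
  rcases le_or_gt p (2 * n / 3) with hm | hm
  · rw [if_neg (by omega), if_pos ⟨hp, hs, hm⟩, one_mul]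
    exact h_le_self
  rcases le_or_gt p n with hl | hl
  · rw [factorization_centralBinom_of_two_mul_self_lt_three_mul hn hl (by omega), pow_zero]
    exact one_le_mul (by split_ifs <;> omega) (by split_ifs <;> omega)
  · rw [if_pos ⟨hp, .inr hl⟩, if_neg (by omega), mul_one]
    exact h_le_two_mul

theorem card_primes_le_sqrt_or_gt_le (n : ℕ) :
    #{p ∈ range (2 * n + 1) | p.Prime ∧ (p ≤ sqrt (2 * n) ∨ n < p)} ≤
      sqrt (2 * n) - 1 + #{p ∈ Ioc n (2 * n) | p.Prime} := by
  calc #{p ∈ range (2 * n + 1) | p.Prime ∧ (p ≤ sqrt (2 * n) ∨ n < p)}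
      ≤ #(Icc 2 (sqrt (2 * n)) ∪ {p ∈ Ioc n (2 * n) | p.Prime}) := by
        refine card_le_card fun p hp => ?_
        simp only [mem_filter, mem_range, mem_union, mem_Icc, mem_Ioc] at hp ⊢
        obtain ⟨hp_lt, hp_prime, hs | hn⟩ := hp
        · exact .inl ⟨hp_prime.two_le, hs⟩
        · exact .inr ⟨⟨hn, by omega⟩, hp_prime⟩
    _ ≤ sqrt (2 * n) - 1 + #{p ∈ Ioc n (2 * n) | p.Prime} := by
        grw [card_union_le, card_Icc]
        omega

theorem prod_primes_sqrt_lt_le_le_primorial (n : ℕ) :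
    ∏ p ∈ range (2 * n + 1) with p.Prime ∧ sqrt (2 * n) < p ∧ p ≤ 2 * n / 3, p ≤
      primorial (2 * n / 3) := by
  refine prod_le_prod_of_subset_of_one_le' (fun p hp => ?_) fun p hp _ => ?_
  · simp only [mem_filter, mem_range] at hp ⊢
    exact ⟨by omega, hp.2.1⟩
  · exact (mem_filter.mp hp).2.one_lt.le

theorem centralBinom_le_pow_mul_four_pow {n : ℕ} (hn : 2 < n) :
    centralBinom n ≤
      (2 * n) ^ (sqrt (2 * n) - 1 + #{p ∈ Ioc n (2 * n) | p.Prime}) * 4 ^ (2 * n / 3) :=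
  calc centralBinom n = ∏ p ∈ range (2 * n + 1), p ^ (centralBinom n).factorization p :=
        (prod_pow_factorization_centralBinom n).symm
    _ ≤ ∏ p ∈ range (2 * n + 1),
          (if p.Prime ∧ (p ≤ sqrt (2 * n) ∨ n < p) then 2 * n else 1) *
            if p.Prime ∧ sqrt (2 * n) < p ∧ p ≤ 2 * n / 3 then p else 1 :=
        prod_le_prod' fun p _ => pow_factorization_centralBinom_le hn p
    _ = (2 * n) ^ #{p ∈ range (2 * n + 1) | p.Prime ∧ (p ≤ sqrt (2 * n) ∨ n < p)} *
          ∏ p ∈ range (2 * n + 1) with p.Prime ∧ sqrt (2 * n) < p ∧ p ≤ 2 * n / 3, p := by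
        rw [prod_mul_distrib, ← prod_filter, ← prod_filter, prod_const]
    _ ≤ _ := by
        gcongr
        · omega
        · exact card_primes_le_sqrt_or_gt_le n
        · exact (prod_primes_sqrt_lt_le_le_primorial n).trans (primorial_le_four_pow _)

theorem two_le_card_primes_Ioc_two_mul {n : ℕ} (hn : 512 ≤ n) :
    2 ≤ #{p ∈ Ioc n (2 * n) | p.Prime} := by
  by_contra! h_card
  have h_bound : centralBinom n ≤ (2 * n) ^ sqrt (2 * n) * 4 ^ (2 * n / 3) := by
    grw [centralBinom_le_pow_mul_four_pow (by omega : 2 < n)]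
    gcongr
    · omega
    · have : 0 < sqrt (2 * n) := sqrt_pos.mpr (by omega)
      omega
  have := four_pow_lt_mul_centralBinom n (by omega)
  grw [h_bound, ← mul_assoc, bertrand_main_inequality hn] at this
  exact lt_irrefl _ this

def primesIocHalf (x : ℕ) : Finset ℕ := {p ∈ Icc 1 x | p.Prime ∧ x < 2 * p}

theorem filter_prime_Ioc_subset_primesIocHalf (x : ℕ) :
    {p ∈ Ioc (x / 2) (2 * (x / 2)) | p.Prime} ⊆ primesIocHalf x := by
  intro p hp
  simp only [primesIocHalf, mem_filter, mem_Ioc, mem_Icc] at hp ⊢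
  exact ⟨⟨by omega, by omega⟩, hp.2, by omega⟩

theorem two_le_card_primesIocHalf_of_lt_two_mul {x : ℕ} (p q : ℕ) (hp : p.Prime) (hq : q.Prime)
    (hpq : p < q) (hx : x < 2 * p) (H : x < q → 2 ≤ #(primesIocHalf x)) :
    2 ≤ #(primesIocHalf x) := by
  rcases lt_or_ge x q with hxq | hqx
  · exact H hxq
  have h_pair : {p, q} ⊆ primesIocHalf x := by
    simp only [insert_subset_iff, singleton_subset_iff, primesIocHalf, mem_filter, mem_Icc]
    exact ⟨⟨⟨hp.pos, by omega⟩, hp, hx⟩, ⟨hq.pos, hqx⟩, hq, by omega⟩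
  exact (card_pair hpq.ne).symm.le.trans (card_le_card h_pair)

theorem two_le_card_primesIocHalf_of_lt {x : ℕ} (hx : 11 ≤ x) (hx_lt : x < 1024) :
    2 ≤ #(primesIocHalf x) := by
  refine two_le_card_primesIocHalf_of_lt_two_mul 521 523 (by norm_num)
    (by norm_num) (by norm_num) (by omega) fun hx_lt => ?_
  refine two_le_card_primesIocHalf_of_lt_two_mul 263 269 (by norm_num)
    (by norm_num) (by norm_num) (by omega) fun hx_lt => ?_
  refine two_le_card_primesIocHalf_of_lt_two_mul 137 139 (by norm_num)
    (by norm_num) (by norm_num) (by omega) fun hx_lt => ?_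
  refine two_le_card_primesIocHalf_of_lt_two_mul 71 73 (by norm_num)
    (by norm_num) (by norm_num) (by omega) fun hx_lt => ?_
  refine two_le_card_primesIocHalf_of_lt_two_mul 37 41 (by norm_num)
    (by norm_num) (by norm_num) (by omega) fun hx_lt => ?_
  refine two_le_card_primesIocHalf_of_lt_two_mul 23 29 (by norm_num)
    (by norm_num) (by norm_num) (by omega) fun hx_lt => ?_
  refine two_le_card_primesIocHalf_of_lt_two_mul 17 19 (by norm_num)
    (by norm_num) (by norm_num) (by omega) fun hx_lt => ?_
  refine two_le_card_primesIocHalf_of_lt_two_mul 11 13 (by norm_num)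
    (by norm_num) (by norm_num) (by omega) fun hx_lt => ?_
  refine two_le_card_primesIocHalf_of_lt_two_mul 7 11 (by norm_num)
    (by norm_num) (by norm_num) (by omega) fun hx_lt => ?_
  omega

end Nat

theorem stmt_16 (x : ℕ) (hx : 11 ≤ x) :
    2 ≤ ((Finset.Icc 1 x).filter (fun p => Nat.Prime p ∧ x < 2 * p)).card := by
  change 2 ≤ #(Nat.primesIocHalf x)
  rcases lt_or_ge x 1024 with hx_lt | hx_ge
  · exact Nat.two_le_card_primesIocHalf_of_lt hx hx_lt
  · exact (Nat.two_le_card_primes_Ioc_two_mul (by omega)).trans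
      (card_le_card (Nat.filter_prime_Ioc_subset_primesIocHalf x))
end

section
/- For every integer x ≥ 17, there are at least three primes p with x/2 < p ≤ x. -/
/-!
Erdős's proof of Bertrand's postulate, allowing two primes in `(n, 2n]`. Every prime power
dividing `C(2n, n)` is at most `2n`, the primes in `(√(2n), 2n/3]` divide it at most once and
their product is at most `4^(2n/3)`, and the primes in `(2n/3, n]` do not divide it. So if
`(n, 2n]` contained at most two primes, then `4^n < n C(2n, n) ≤ n (2n)^(√(2n) + 2) 4^(2n/3)`,
which is false for `n ≥ 578` because the logarithm of `x (2x)^(√(2x) + 2) / 4^(x/3)` is concave.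
For `17 ≤ x < 1156`, prime triples `p < q < r` with `r < 2p` cover every `x`.
-/

open Real Finset

theorem ConcaveOn.comp_const_mul {g : ℝ → ℝ} {a c : ℝ} (hc : 0 < c)
    (hg : ConcaveOn ℝ (Set.Ioi a) g) : ConcaveOn ℝ (Set.Ioi (a / c)) fun x => g (c * x) :=
  (hg.comp_linearMap (c • LinearMap.id)).subset
    (fun _ hx => by simpa using (div_lt_iff₀' hc).1 hx) (convex_Ioi _)

namespace RamanujanPrime

noncomputable def logExcess (x : ℝ) : ℝ :=
  log x + (√(2 * x) + 2) * log (2 * x) - log 4 / 3 * x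

theorem logExcess_eq {x : ℝ} (hx : 0 < x) :
    logExcess x = log (x * (2 * x) ^ (√(2 * x) + 2)) - log (4 ^ (x / 3)) := by
  rw [logExcess, log_mul hx.ne' (by positivity), log_rpow (by positivity),
    log_rpow (by norm_num)]
  ring

theorem concaveOn_logExcess : ConcaveOn ℝ (Set.Ioi (1 / 2)) logExcess := by
  have hlog : ConcaveOn ℝ (Set.Ioi 0) log := strictConcaveOn_log_Ioi.concaveOn
  have hsqrt_log : ConcaveOn ℝ (Set.Ioi (1 / 2)) fun x => √(2 * x) * log (2 * x) :=
    strictConcaveOn_sqrt_mul_log_Ioi.concaveOn.comp_const_mul two_pos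
  have hlog_two_mul : ConcaveOn ℝ (Set.Ioi (1 / 2)) fun x => log (2 * x) :=
    (hlog.comp_const_mul two_pos).subset (Set.Ioi_subset_Ioi (by norm_num)) (convex_Ioi _)
  have hlin : ConvexOn ℝ (Set.Ioi (1 / 2)) fun x : ℝ => log 4 / 3 * x :=
    (convexOn_id (convex_Ioi _)).smul (by positivity)
  unfold logExcess
  simp_rw [add_mul]
  exact ((hlog.subset (Set.Ioi_subset_Ioi (by norm_num)) (convex_Ioi _)).add
    (hsqrt_log.add (hlog_two_mul.smul zero_le_two))).sub hlin

theorem logExcess_eighteen_nonneg : 0 ≤ logExcess 18 := by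
  rw [logExcess_eq (by norm_num), sub_nonneg, log_le_log_iff (by positivity) (by positivity)]
  have hsqrt : √(2 * 18 : ℝ) = 6 := by rw [show (2 * 18 : ℝ) = 6 ^ 2 by norm_num]; simp
  rw [hsqrt, show (6 + 2 : ℝ) = (8 : ℕ) by norm_num, show (18 / 3 : ℝ) = (6 : ℕ) by norm_num,
    rpow_natCast, rpow_natCast]
  norm_num

-- `578 = 2 * 17 ^ 2` makes `√(2 * 578)` an integer; `512 = 2 * 16 ^ 2` would be too small.
theorem logExcess_578_nonpos : logExcess 578 ≤ 0 := by
  rw [logExcess_eq (by norm_num), sub_nonpos, log_le_log_iff (by positivity) (by positivity)]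
  have hsqrt : √(2 * 578 : ℝ) = 34 := by rw [show (2 * 578 : ℝ) = 34 ^ 2 by norm_num]; simp
  rw [hsqrt, show (34 + 2 : ℝ) = (36 : ℕ) by norm_num, rpow_natCast]
  calc (578 : ℝ) * (2 * 578) ^ 36 ≤ (4 : ℝ) ^ (192 : ℕ) := by norm_num
    _ ≤ 4 ^ (578 / 3 : ℝ) := by
      rw [← rpow_natCast]
      exact rpow_le_rpow_of_exponent_le (by norm_num) (by norm_num)

theorem logExcess_nonpos {x : ℝ} (hx : 578 ≤ x) : logExcess x ≤ 0 :=
  have h578_le_18 := logExcess_578_nonpos.trans logExcess_eighteen_nonneg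
  (concaveOn_logExcess.right_le_of_le_left'' (by norm_num) (Set.mem_Ioi.2 (by linarith))
    (by norm_num) hx h578_le_18).trans logExcess_578_nonpos

theorem real_main_inequality {x : ℝ} (hx : 578 ≤ x) :
    x * (2 * x) ^ (√(2 * x) + 2) * 4 ^ (2 * x / 3) ≤ 4 ^ x := by
  have hx₀ : 0 < x := by linarith
  have h := logExcess_nonpos hx
  rw [logExcess_eq hx₀, sub_nonpos, log_le_log_iff (by positivity) (by positivity)] at h
  calc x * (2 * x) ^ (√(2 * x) + 2) * 4 ^ (2 * x / 3) ≤ 4 ^ (x / 3) * 4 ^ (2 * x / 3) := by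
        gcongr
    _ = 4 ^ x := by rw [← rpow_add (by norm_num)]; ring_nf

theorem main_inequality {n : ℕ} (hn : 578 ≤ n) :
    n * (2 * n) ^ (Nat.sqrt (2 * n) + 2) * 4 ^ (2 * n / 3) ≤ 4 ^ n := by
  rw [← @Nat.cast_le ℝ]
  simp only [Nat.cast_add, Nat.cast_mul, Nat.cast_pow, ← rpow_natCast]
  refine le_trans ?_ (real_main_inequality (by exact_mod_cast hn))
  push_cast
  gcongr
  · exact_mod_cast (by omega : 1 ≤ 2 * n)
  · exact_mod_cast Real.nat_sqrt_le_real_sqrt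
  · norm_num
  · exact Nat.cast_div_le.trans (by norm_cast)

theorem prod_pow_factorization_choose_le {N : ℕ} (k m : ℕ) (hN : 0 < N) :
    ∏ p ∈ range (m + 1), p ^ (N.choose k).factorization p ≤ N ^ N.sqrt * 4 ^ m := by
  set v := fun p => p ^ (N.choose k).factorization p
  set S := {p ∈ range (m + 1) | p.Prime}
  have hv_prime : ∏ p ∈ S, v p = ∏ p ∈ range (m + 1), v p :=
    prod_filter_of_ne fun p _ hp => by
      contrapose hp
      simp [v, Nat.factorization_eq_zero_of_not_prime _ hp]
  rw [← hv_prime, ← prod_filter_mul_prod_filter_not S (· ≤ N.sqrt)]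
  gcongr ?_ * ?_
  · calc ∏ p ∈ S with p ≤ N.sqrt, v p
        ≤ N ^ #{p ∈ S | p ≤ N.sqrt} :=
          prod_le_pow_card _ _ _ fun p _ => Nat.pow_factorization_choose_le hN
      _ ≤ N ^ #(Icc 1 N.sqrt) := by
          refine Nat.pow_le_pow_right hN (card_le_card fun p hp => ?_)
          simp only [S, mem_filter, mem_range] at hp
          exact mem_Icc.2 ⟨hp.1.2.one_lt.le, hp.2⟩
      _ = N ^ N.sqrt := by simp
  · calc ∏ p ∈ S with ¬p ≤ N.sqrt, v p
        ≤ ∏ p ∈ S with ¬p ≤ N.sqrt, p :=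
          prod_le_prod' fun p hp => by
            simp only [S, mem_filter] at hp
            have : (N.choose k).factorization p ≤ 1 :=
              Nat.factorization_choose_le_one (Nat.sqrt_lt'.1 (not_le.1 hp.2))
            simpa using Nat.pow_le_pow_right hp.1.2.pos this
      _ ≤ primorial m := prod_le_prod_of_subset_of_one_le' (filter_subset _ _)
          fun p hp _ => (mem_filter.1 hp).2.one_lt.le
      _ ≤ 4 ^ m := primorial_le_four_pow m

theorem centralBinom_eq_prod_mul_prod {n : ℕ} (hn : 2 < n) :
    n.centralBinom = (∏ p ∈ range (2 * n / 3 + 1), p ^ n.centralBinom.factorization p) *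
      ∏ p ∈ Ioc n (2 * n) with p.Prime, p ^ n.centralBinom.factorization p := by
  have hdisj : Disjoint (range (2 * n / 3 + 1)) {p ∈ Ioc n (2 * n) | p.Prime} := by
    refine disjoint_left.2 fun p hp hp' => ?_
    simp only [mem_range, mem_filter, mem_Ioc] at hp hp'
    omega
  rw [← prod_union hdisj]
  refine (Nat.prod_pow_factorization_centralBinom n).symm.trans
    (prod_subset (fun p hp => ?_) fun p hp hp' => ?_).symm
  · simp only [mem_union, mem_range, mem_filter, mem_Ioc] at hp ⊢
    omega
  · simp only [mem_union, mem_range, mem_filter, mem_Ioc, not_or, not_and] at hp hp'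
    by_cases hprime : p.Prime
    · have hpn : p ≤ n := by by_contra; exact hp'.2 ⟨by omega, by omega⟩ hprime
      rw [Nat.factorization_centralBinom_of_two_mul_self_lt_three_mul hn hpn (by omega), pow_zero]
    · rw [Nat.factorization_eq_zero_of_not_prime _ hprime, pow_zero]

theorem centralBinom_le_of_card_primes_le {n k : ℕ} (hn : 2 < n)
    (hk : #{p ∈ Ioc n (2 * n) | p.Prime} ≤ k) :
    n.centralBinom ≤ (2 * n) ^ (Nat.sqrt (2 * n) + k) * 4 ^ (2 * n / 3) := by
  have h2n : 0 < 2 * n := by omega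
  rw [centralBinom_eq_prod_mul_prod hn, pow_add, mul_right_comm]
  gcongr ?_ * ?_
  · exact prod_pow_factorization_choose_le n (2 * n / 3) h2n
  · calc ∏ p ∈ Ioc n (2 * n) with p.Prime, p ^ n.centralBinom.factorization p
        ≤ (2 * n) ^ #{p ∈ Ioc n (2 * n) | p.Prime} :=
          prod_le_pow_card _ _ _ fun p _ => Nat.pow_factorization_choose_le h2n
      _ ≤ (2 * n) ^ k := Nat.pow_le_pow_right h2n hk

theorem two_lt_card_primes {n : ℕ} (hn : 578 ≤ n) : 2 < #{p ∈ Ioc n (2 * n) | p.Prime} := by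
  by_contra! hcard
  have hlower : 4 ^ n < n * n.centralBinom := Nat.four_pow_lt_mul_centralBinom n (by omega)
  have hupper := centralBinom_le_of_card_primes_le (by omega) hcard
  have := main_inequality hn
  rw [mul_assoc] at this
  exact (hlower.trans_le ((Nat.mul_le_mul_left n hupper).trans this)).false

theorem three_le_card_of_primes {p q r x : ℕ}
    (hpqr : p.Prime ∧ q.Prime ∧ r.Prime ∧ p < q ∧ q < r) (hrx : r ≤ x) (hxp : x < 2 * p) :
    3 ≤ #{s ∈ Icc 1 x | s.Prime ∧ x < 2 * s} := by
  obtain ⟨hp, hq, hr, hpq, hqr⟩ := hpqr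
  calc 3 = #{p, q, r} := by
        rw [card_insert_of_notMem (by simp; omega), card_insert_of_notMem (by simp; omega),
          card_singleton]
    _ ≤ _ := card_le_card <| by
      simp only [insert_subset_iff, singleton_subset_iff, mem_filter, mem_Icc]
      exact ⟨⟨⟨hp.one_le, by omega⟩, hp, by omega⟩, ⟨⟨hq.one_le, by omega⟩, hq, by omega⟩,
        ⟨⟨hr.one_le, by omega⟩, hr, by omega⟩⟩

theorem three_le_card_of_lt {x : ℕ} (hx : 17 ≤ x) (hx' : x < 1156) :
    3 ≤ #{s ∈ Icc 1 x | s.Prime ∧ x < 2 * s} := by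
  obtain h | h | h | h | h | h | h | h | h | h :
      x < 22 ∨ (19 ≤ x ∧ x < 26) ∨ (23 ≤ x ∧ x < 34) ∨ (31 ≤ x ∧ x < 46) ∨
      (43 ≤ x ∧ x < 74) ∨ (73 ≤ x ∧ x < 134) ∨ (131 ≤ x ∧ x < 226) ∨ (223 ≤ x ∧ x < 398) ∨
      (397 ≤ x ∧ x < 766) ∨ 761 ≤ x := by omega
  · exact three_le_card_of_primes (p := 11) (q := 13) (r := 17) (by norm_num) hx h
  · exact three_le_card_of_primes (p := 13) (q := 17) (r := 19) (by norm_num) h.1 h.2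
  · exact three_le_card_of_primes (p := 17) (q := 19) (r := 23) (by norm_num) h.1 h.2
  · exact three_le_card_of_primes (p := 23) (q := 29) (r := 31) (by norm_num) h.1 h.2
  · exact three_le_card_of_primes (p := 37) (q := 41) (r := 43) (by norm_num) h.1 h.2
  · exact three_le_card_of_primes (p := 67) (q := 71) (r := 73) (by norm_num) h.1 h.2
  · exact three_le_card_of_primes (p := 113) (q := 127) (r := 131) (by norm_num) h.1 h.2
  · exact three_le_card_of_primes (p := 199) (q := 211) (r := 223) (by norm_num) h.1 h.2
  · exact three_le_card_of_primes (p := 383) (q := 389) (r := 397) (by norm_num) h.1 h.2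
  · exact three_le_card_of_primes (p := 751) (q := 757) (r := 761) (by norm_num) h
      (by omega)

end RamanujanPrime

theorem stmt_17 (x : ℕ) (hx : 17 ≤ x) :
    3 ≤ ((Finset.Icc 1 x).filter (fun p => Nat.Prime p ∧ x < 2 * p)).card := by
  rcases lt_or_ge x 1156 with hsmall | hlarge
  · exact RamanujanPrime.three_le_card_of_lt hx hsmall
  · have hsub : {p ∈ Ioc (x / 2) (2 * (x / 2)) | p.Prime} ⊆
        {p ∈ Icc 1 x | p.Prime ∧ x < 2 * p} := fun p hp => by
      simp only [mem_filter, mem_Ioc, mem_Icc] at hp ⊢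
      exact ⟨⟨hp.2.one_le, by omega⟩, hp.2, by omega⟩
    exact (RamanujanPrime.two_lt_card_primes (by omega)).trans_le (card_le_card hsub)
end
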